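/- If X and Y are unit Fréchet random variables with tail dependence index λ = 0 (tail independent), then both quotient ratios X/Y and Y/X have unbounded support, hence max_{i≤n} Yᵢ/Xᵢ → ∞ and max_{i≤n} Xᵢ/Yᵢ → ∞ a.s., and consequently the quotient correlation qₙ → 0 almost surely as n → ∞. -/

import Mathlib

/-!
If `Y ≤ M X` almost surely for some `M ≥ 1`, then `{Y > M u} ⊆ {X > u, Y > u}`, and for unit
Fréchet margins `P(Y > M u) ≈ 1 / (M u)` while `P(Y > u) ≈ 1 / u`; so the tail dependence ratio
stays above `1 / (2M)`, contradicting `λ = 0`. Hence `Y / X` (and symmetrically `X / Y`) exceeds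
every level with positive probability, and by the second Borel–Cantelli lemma an i.i.d. sample
exceeds it infinitely often. Both running maxima therefore diverge, and `qₙ` behaves like
`1 / max Xᵢ/Yᵢ + 1 / max Yᵢ/Xᵢ → 0`.
-/

open MeasureTheory ProbabilityTheory Real Filter Topology Set

theorem half_le_one_sub_exp_neg {x : ℝ} (h0 : 0 ≤ x) (h1 : x ≤ 1) : x / 2 ≤ 1 - exp (-x) := by
  have hinv : exp (-x) * exp x = 1 := by rw [← exp_add, neg_add_cancel, exp_zero]
  nlinarith [add_one_le_exp x, exp_pos (-x)]

theorem tendsto_iSup_fin_atTop_of_not_bddAbove {a : ℕ → ℝ} (h : ¬BddAbove (range a)) :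
    Tendsto (fun n : ℕ => ⨆ i : Fin n, a i) atTop atTop := by
  refine tendsto_atTop.2 fun b => ?_
  obtain ⟨_, ⟨i, rfl⟩, hi⟩ := not_bddAbove_iff.1 h b
  filter_upwards [eventually_gt_atTop i] with n hn
  exact hi.le.trans (le_ciSup (f := fun j : Fin n => a j) (finite_range _).bddAbove ⟨i, hn⟩)

theorem tendsto_add_sub_two_div_mul_sub_one {a b : ℕ → ℝ} (ha : Tendsto a atTop atTop)
    (hb : Tendsto b atTop atTop) :
    Tendsto (fun n => (a n + b n - 2) / (a n * b n - 1)) atTop (𝓝 0) := by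
  have hab := (ha.atTop_mul_atTop₀ hb).inv_tendsto_atTop
  have hnum : Tendsto (fun n => (b n)⁻¹ + (a n)⁻¹ - 2 * (a n * b n)⁻¹) atTop (𝓝 0) := by
    simpa using (hb.inv_tendsto_atTop.add ha.inv_tendsto_atTop).sub (hab.const_mul 2)
  have hden : Tendsto (fun n => 1 - (a n * b n)⁻¹) atTop (𝓝 1) := by
    simpa using tendsto_const_nhds.sub hab
  have hlim := hnum.div hden one_ne_zero
  rw [zero_div] at hlim
  refine hlim.congr' ?_
  filter_upwards [ha.eventually_ge_atTop 2, hb.eventually_ge_atTop 2] with n han hbn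
  have : a n * b n - 1 ≠ 0 := by nlinarith
  rw [Pi.div_apply]
  field_simp [(by linarith : a n ≠ 0), (by linarith : b n ≠ 0)]

section

variable {Ω : Type*} [MeasurableSpace Ω] {μ : Measure Ω}

theorem measure_mul_lt_le_measure_lt_and_lt {V W : Ω → ℝ} {M u : ℝ} (hM : 1 ≤ M) (hu : 0 ≤ u)
    (h : ∀ᵐ ω ∂μ, V ω ≤ M * W ω) :
    μ {ω | M * u < V ω} ≤ μ {ω | u < V ω ∧ u < W ω} := by
  refine measure_mono_ae ?_
  filter_upwards [h] with ω hVW hMu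
  exact ⟨(le_mul_of_one_le_left hu hM).trans_lt hMu,
    lt_of_mul_lt_mul_left (hMu.trans_le hVW) (by linarith)⟩

theorem ae_le_mul_of_measure_lt_div_eq_zero {V W : Ω → ℝ} {M : ℝ} (hW : ∀ᵐ ω ∂μ, 0 < W ω)
    (h : μ {ω | M < V ω / W ω} = 0) : ∀ᵐ ω ∂μ, V ω ≤ M * W ω := by
  have hle : ∀ᵐ ω ∂μ, V ω / W ω ≤ M := ae_iff.2 (by simpa only [not_le] using h)
  filter_upwards [hle, hW] with ω hω hWω
  exact (div_le_iff₀ hWω).1 hω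

def IsUnitFrechet (μ : Measure Ω) (V : Ω → ℝ) : Prop :=
  ∀ x : ℝ, 0 < x → μ {ω | V ω ≤ x} = ENNReal.ofReal (exp (-1 / x))

namespace IsUnitFrechet

variable [IsProbabilityMeasure μ] {V : Ω → ℝ}

theorem measureReal_lt (hV : IsUnitFrechet μ V) (hVm : Measurable V) {u : ℝ} (hu : 0 < u) :
    μ.real {ω | u < V ω} = 1 - exp (-1 / u) := by
  have hcompl : {ω | u < V ω} = {ω | V ω ≤ u}ᶜ := by ext; simp
  rw [hcompl, probReal_compl_eq_one_sub (measurableSet_le hVm measurable_const),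
    measureReal_def, hV u hu, ENNReal.toReal_ofReal (exp_nonneg _)]

theorem measureReal_lt_le (hV : IsUnitFrechet μ V) (hVm : Measurable V) {u : ℝ} (hu : 0 < u) :
    μ.real {ω | u < V ω} ≤ u⁻¹ := by
  rw [hV.measureReal_lt hVm hu, neg_div, one_div]
  linarith [one_sub_le_exp_neg u⁻¹]

theorem measureReal_lt_pos (hV : IsUnitFrechet μ V) (hVm : Measurable V) {u : ℝ} (hu : 0 < u) :
    0 < μ.real {ω | u < V ω} := by
  rw [hV.measureReal_lt hVm hu, sub_pos, exp_lt_one_iff, neg_div, neg_lt_zero]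
  positivity

theorem inv_two_mul_le_measureReal_lt (hV : IsUnitFrechet μ V) (hVm : Measurable V) {u : ℝ}
    (hu : 1 ≤ u) : (2 * u)⁻¹ ≤ μ.real {ω | u < V ω} := by
  rw [hV.measureReal_lt hVm (by linarith), neg_div, one_div, mul_inv, inv_mul_eq_div]
  exact half_le_one_sub_exp_neg (by positivity) (inv_le_one_of_one_le₀ hu)

theorem not_tendsto_tail_ratio {X Y V : Ω → ℝ} (hY : IsUnitFrechet μ Y) (hYm : Measurable Y)
    (hV : IsUnitFrechet μ V) (hVm : Measurable V) {M : ℝ} (hM : 1 ≤ M)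
    (hdom : ∀ u, 1 ≤ u → μ {ω | M * u < V ω} ≤ μ {ω | u < X ω ∧ u < Y ω}) :
    ¬Tendsto (fun u : ℝ =>
      (μ {ω | u < X ω ∧ u < Y ω}).toReal / (μ {ω | u < Y ω}).toReal) atTop (𝓝 0) := by
  intro htail
  have hbound : ∀ u, 1 ≤ u →
      (2 * M)⁻¹ ≤ μ.real {ω | u < X ω ∧ u < Y ω} / μ.real {ω | u < Y ω} := by
    intro u hu
    have hjoint : (2 * (M * u))⁻¹ ≤ μ.real {ω | u < X ω ∧ u < Y ω} :=
      (hV.inv_two_mul_le_measureReal_lt hVm (one_le_mul_of_one_le_of_one_le hM hu)).trans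
        (ENNReal.toReal_mono (measure_ne_top _ _) (hdom u hu))
    calc (2 * M)⁻¹ = (2 * (M * u))⁻¹ / u⁻¹ := by field_simp
      _ ≤ _ := div_le_div₀ (by positivity) hjoint (hY.measureReal_lt_pos hYm (by linarith))
          (hY.measureReal_lt_le hYm (by linarith))
  obtain ⟨u, hu, hlt⟩ := ((eventually_ge_atTop 1).and
    (htail.eventually_lt_const (by positivity : (0 : ℝ) < (2 * M)⁻¹))).exists
  exact (hbound u hu).not_gt hlt

end IsUnitFrechet

theorem measure_lt_div_pos_of_tendsto_tail_ratio [IsProbabilityMeasure μ] {X Y : Ω → ℝ}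
    (hX : IsUnitFrechet μ X) (hXm : Measurable X) (hY : IsUnitFrechet μ Y) (hYm : Measurable Y)
    (hXpos : ∀ᵐ ω ∂μ, 0 < X ω) (hYpos : ∀ᵐ ω ∂μ, 0 < Y ω)
    (htail : Tendsto (fun u : ℝ =>
      (μ {ω | u < X ω ∧ u < Y ω}).toReal / (μ {ω | u < Y ω}).toReal) atTop (𝓝 0)) (M : ℝ) :
    0 < μ {ω | M < Y ω / X ω} ∧ 0 < μ {ω | M < X ω / Y ω} := by
  wlog hM : 1 ≤ M generalizing M
  · have hmono : ∀ f : Ω → ℝ, μ {ω | 1 < f ω} ≤ μ {ω | M < f ω} := fun f =>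
      measure_mono fun ω hω => (not_le.1 hM).trans hω
    exact (this 1 le_rfl).imp (·.trans_le (hmono _)) (·.trans_le (hmono _))
  refine ⟨pos_iff_ne_zero.2 fun h0 => ?_, pos_iff_ne_zero.2 fun h0 => ?_⟩
  · refine hY.not_tendsto_tail_ratio hYm hY hYm hM (fun u hu => ?_) htail
    simpa only [and_comm] using measure_mul_lt_le_measure_lt_and_lt hM (by linarith)
      (ae_le_mul_of_measure_lt_div_eq_zero hXpos h0)
  · exact hY.not_tendsto_tail_ratio hYm hX hXm hM (fun u hu =>
      measure_mul_lt_le_measure_lt_and_lt hM (by linarith)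
        (ae_le_mul_of_measure_lt_div_eq_zero hYpos h0)) htail

section IID

variable [IsProbabilityMeasure μ] {β : Type*} [MeasurableSpace β] {f : ℕ → Ω → β}

theorem ae_frequently_mem_of_iIndepFun (hf : ∀ i, Measurable (f i)) (hind : iIndepFun f μ)
    (hident : ∀ i, μ.map (f i) = μ.map (f 0)) {S : Set β} (hS : MeasurableSet S)
    (hpos : μ (f 0 ⁻¹' S) ≠ 0) : ∀ᵐ ω ∂μ, ∃ᶠ i in atTop, f i ω ∈ S := by
  have hsm : ∀ i, MeasurableSet (f i ⁻¹' S) := fun i => hf i hS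
  have hsame : ∀ i, μ (f i ⁻¹' S) = μ (f 0 ⁻¹' S) := fun i => by
    rw [← Measure.map_apply (hf i) hS, ← Measure.map_apply (hf 0) hS, hident i]
  have hsets : iIndepSet (fun i => f i ⁻¹' S) μ :=
    (iIndepSet_iff_meas_biInter hsm).2 fun t => hind.measure_inter_preimage_eq_mul t fun _ _ => hS
  have hlimsup := measure_limsup_eq_one hsm hsets <| by
    simpa only [hsame] using ENNReal.tsum_const_eq_top_of_ne_zero hpos
  have hmeas : MeasurableSet (limsup (fun i => f i ⁻¹' S) atTop) :=
    MeasurableSet.measurableSet_limsup hsm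
  filter_upwards [ae_iff.2 ((prob_compl_eq_zero_iff hmeas).2 hlimsup)] with ω hω
  exact mem_limsup_iff_frequently_mem.1 hω

theorem ae_not_bddAbove_of_iIndepFun (hf : ∀ i, Measurable (f i)) (hind : iIndepFun f μ)
    (hident : ∀ i, μ.map (f i) = μ.map (f 0)) {g : β → ℝ} (hg : Measurable g)
    (hpos : ∀ M : ℝ, 0 < μ {ω | M < g (f 0 ω)}) :
    ∀ᵐ ω ∂μ, ¬BddAbove (range fun i => g (f i ω)) := by
  have hfreq : ∀ᵐ ω ∂μ, ∀ N : ℕ, ∃ᶠ i in atTop, (N : ℝ) < g (f i ω) := ae_all_iff.2 fun N =>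
    ae_frequently_mem_of_iIndepFun hf hind hident (measurableSet_lt measurable_const hg)
      (hpos N).ne'
  filter_upwards [hfreq] with ω hω
  refine not_bddAbove_iff.2 fun x => ?_
  obtain ⟨N, hN⟩ := exists_nat_gt x
  obtain ⟨i, hi⟩ := (hω N).exists
  exact ⟨_, ⟨i, rfl⟩, hN.trans hi⟩

end IID

end

/-- Theorem 5.1 (necessary condition): if `X` and `Y` are unit Fréchet with tail
dependence index `λ = 0`, then `X/Y` and `Y/X` have unbounded support, hence for an
i.i.d. sample `(Xᵢ,Yᵢ)` the maxima `max_{i≤n} Yᵢ/Xᵢ` and `max_{i≤n} Xᵢ/Yᵢ` tend to `∞`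
a.s., and consequently `qₙ → 0` almost surely. -/
theorem tail_independent_quotient_correlation_to_zero {Ω : Type*} [MeasurableSpace Ω]
    (μ : Measure Ω) [IsProbabilityMeasure μ] (X Y : ℕ → Ω → ℝ)
    (hX : ∀ i, Measurable (X i)) (hY : ∀ i, Measurable (Y i))
    (hiid : iIndepFun (fun i ω => (X i ω, Y i ω)) μ)
    (hident : ∀ i, Measure.map (fun ω => (X i ω, Y i ω)) μ
      = Measure.map (fun ω => (X 0 ω, Y 0 ω)) μ)
    (hXpos : ∀ i, ∀ᵐ ω ∂μ, 0 < X i ω) (hYpos : ∀ i, ∀ᵐ ω ∂μ, 0 < Y i ω)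
    (hXF : ∀ i, ∀ x : ℝ, 0 < x → μ {ω | X i ω ≤ x} = ENNReal.ofReal (exp (-1 / x)))
    (hYF : ∀ i, ∀ x : ℝ, 0 < x → μ {ω | Y i ω ≤ x} = ENNReal.ofReal (exp (-1 / x)))
    (htail : Tendsto (fun u : ℝ =>
        (μ {ω | u < X 0 ω ∧ u < Y 0 ω}).toReal / (μ {ω | u < Y 0 ω}).toReal)
      atTop (nhds 0)) :
    (∀ M : ℝ, 0 < μ {ω | M < Y 0 ω / X 0 ω} ∧ 0 < μ {ω | M < X 0 ω / Y 0 ω}) ∧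
    (∀ᵐ ω ∂μ,
      Tendsto (fun n : ℕ => ⨆ i : Fin n, Y i ω / X i ω) atTop atTop ∧
      Tendsto (fun n : ℕ => ⨆ i : Fin n, X i ω / Y i ω) atTop atTop ∧
      Tendsto (fun n : ℕ =>
          ((⨆ i : Fin n, Y i ω / X i ω) + (⨆ i : Fin n, X i ω / Y i ω) - 2) /
          ((⨆ i : Fin n, Y i ω / X i ω) * (⨆ i : Fin n, X i ω / Y i ω) - 1))
        atTop (nhds 0)) := by
  have hratio := measure_lt_div_pos_of_tendsto_tail_ratio (hXF 0) (hX 0) (hYF 0) (hY 0)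
    (hXpos 0) (hYpos 0) htail
  have hf : ∀ i, Measurable fun ω => (X i ω, Y i ω) := fun i => (hX i).prodMk (hY i)
  refine ⟨hratio, ?_⟩
  filter_upwards [ae_not_bddAbove_of_iIndepFun hf hiid hident
      (measurable_snd.div measurable_fst) fun M => (hratio M).1,
    ae_not_bddAbove_of_iIndepFun hf hiid hident
      (measurable_fst.div measurable_snd) fun M => (hratio M).2] with ω hYX hXY
  have hYX' := tendsto_iSup_fin_atTop_of_not_bddAbove hYX
  have hXY' := tendsto_iSup_fin_atTop_of_not_bddAbove hXY
  exact ⟨hYX', hXY', tendsto_add_sub_two_div_mul_sub_one hYX' hXY'⟩
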